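/- arXiv:2209.03435 — 3 statements merged into one kernel-verified Lean document; each statement's English description precedes it below -/
import Mathlib

section
/- Let N ≥ 2 be an integer and let f be a real polynomial of degree at most N with f(0) = f(1) = 0. Then there exist a real number β > 0 and real numbers α_0, α_1, …, α_N with α_0 = 0, α_N = 1, and 0 ≤ α_k ≤ 1 for all 0 ≤ k ≤ N, such that f(u) = β ( ∑_{k=0}^{N} C(N,k) α_k u^k (1−u)^{N−k} − u ) for all real u. -/
/-! Write `f` in the Bernstein basis of degree `N`, `f = ∑ c_k b_{N,k}`; evaluating at the
endpoints gives `c_0 = f(0) = 0` and `c_N = f(1) = 0`. Since `∑ (k/N) b_{N,k} = X`, the choice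
`α_k = c_k/β + k/N` gives `f = β (∑ α_k b_{N,k} - X)`. Once `β ≥ N |c_k|` for all `k`, the
perturbation `c_k/β` has size at most `1/N`, so it keeps the interior values `k/N ∈ [1/N, 1 - 1/N]`
inside `[0, 1]`, and it vanishes at `k = 0` and `k = N`. -/

open Polynomial Finset

namespace bernsteinPolynomial

variable {R : Type*} [CommRing R]

theorem eval_eq (n ν : ℕ) (x : R) :
    (bernsteinPolynomial R n ν).eval x = n.choose ν * x ^ ν * (1 - x) ^ (n - ν) := by
  simp [bernsteinPolynomial]

theorem choose_mul (n j m : ℕ) :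
    ((j + m).choose j : R[X]) * bernsteinPolynomial R n (j + m) =
      (n.choose j : R[X]) * X ^ j * bernsteinPolynomial R (n - j) m := by
  have hchoose :
      (n.choose (j + m) * (j + m).choose j : R[X]) = n.choose j * (n - j).choose m := by
    rw [← Nat.cast_mul, ← Nat.cast_mul, Nat.choose_mul (Nat.le_add_right j m),
      Nat.add_sub_cancel_left]
  have hexp : n - (j + m) = n - j - m := by omega
  simp only [bernsteinPolynomial, hexp, pow_add]
  linear_combination X ^ j * X ^ m * (1 - X) ^ (n - j - m) * hchoose

theorem sum_choose_mul (n j : ℕ) (hj : j ≤ n) :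
    ∑ ν ∈ range (n + 1), (ν.choose j : R[X]) * bernsteinPolynomial R n ν =
      (n.choose j : R[X]) * X ^ j := by
  rw [← sum_range_add_sum_Ico _ (by omega : j ≤ n + 1), sum_Ico_eq_sum_range,
    sum_eq_zero fun ν hν => by rw [Nat.choose_eq_zero_of_lt (mem_range.1 hν)]; simp, zero_add,
    sum_congr rfl fun m _ => choose_mul n j m, ← mul_sum,
    show n + 1 - j = n - j + 1 by omega, bernsteinPolynomial.sum, mul_one]

theorem eval_zero_sum_smul (n : ℕ) (c : ℕ → R) :
    (∑ ν ∈ range (n + 1), c ν • bernsteinPolynomial R n ν).eval 0 = c 0 := by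
  simp [eval_finsetSum, eval_at_0]

theorem eval_one_sum_smul (n : ℕ) (c : ℕ → R) :
    (∑ ν ∈ range (n + 1), c ν • bernsteinPolynomial R n ν).eval 1 = c n := by
  simp [eval_finsetSum, eval_at_1]

variable {K : Type*} [Field K] [CharZero K]

theorem X_pow_eq_sum_smul (n j : ℕ) (hj : j ≤ n) :
    (X ^ j : K[X]) =
      ∑ ν ∈ range (n + 1), ((ν.choose j : K) / n.choose j) • bernsteinPolynomial K n ν := by
  have hne : (n.choose j : K) ≠ 0 := by exact_mod_cast (Nat.choose_pos hj).ne'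
  calc (X ^ j : K[X])
      = (n.choose j : K)⁻¹ • ((n.choose j : K[X]) * X ^ j) := by
        rw [← C_eq_natCast, ← smul_eq_C_mul, smul_smul, inv_mul_cancel₀ hne, one_smul]
    _ = _ := by
        simp_rw [← sum_choose_mul n j hj, smul_sum, div_eq_inv_mul, mul_smul, ← C_eq_natCast,
          ← smul_eq_C_mul]

theorem exists_eq_sum_smul {n : ℕ} {f : K[X]} (hf : f.natDegree ≤ n) :
    ∃ c : ℕ → K, f = ∑ ν ∈ range (n + 1), c ν • bernsteinPolynomial K n ν := by
  refine ⟨fun ν => ∑ j ∈ range (n + 1), f.coeff j * (ν.choose j / n.choose j), ?_⟩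
  conv_lhs => rw [as_sum_range' f (n + 1) (by omega)]
  simp_rw [Finset.sum_smul, mul_smul]
  rw [sum_comm]
  refine sum_congr rfl fun j hj => ?_
  rw [← smul_sum, ← X_pow_eq_sum_smul n j (by grind), smul_X_eq_monomial]

theorem sum_div_smul_eq_X {n : ℕ} (hn : n ≠ 0) :
    ∑ ν ∈ range (n + 1), ((ν : K) / n) • bernsteinPolynomial K n ν = X := by
  simp_rw [div_eq_inv_mul, mul_smul, ← smul_sum, Nat.cast_smul_eq_nsmul, sum_smul,
    ← Nat.cast_smul_eq_nsmul K, smul_smul, inv_mul_cancel₀ (Nat.cast_ne_zero.2 hn : (n : K) ≠ 0),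
    one_smul]

end bernsteinPolynomial

theorem div_add_div_mem_Icc {N k : ℕ} (hk : k ≤ N) {c β : ℝ} (hβ : 0 < β) (hcβ : N * |c| ≤ β)
    (h0 : k = 0 → c = 0) (hN : k = N → c = 0) : c / β + k / N ∈ Set.Icc (0 : ℝ) 1 := by
  by_cases hc : c = 0
  · simpa [hc] using ⟨by positivity, div_le_one_of_le₀ (by exact_mod_cast hk) (by positivity)⟩
  have hk0 : (1 : ℝ) ≤ k := by exact_mod_cast Nat.one_le_iff_ne_zero.2 (mt h0 hc)
  have hkN : (k : ℝ) + 1 ≤ N := by exact_mod_cast lt_of_le_of_ne hk (mt hN hc)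
  have hN0 : (0 : ℝ) < N := by linarith
  obtain ⟨hlo, hhi⟩ := abs_le.1 (show |c * N| ≤ β by rwa [abs_mul, Nat.abs_cast, mul_comm])
  rw [div_add_div _ _ hβ.ne' hN0.ne', Set.mem_Icc, le_div_iff₀ (by positivity),
    div_le_one (by positivity)]
  constructor <;>
    linarith [mul_le_mul_of_nonneg_left hk0 hβ.le, mul_le_mul_of_nonneg_left hkN hβ.le]

open bernsteinPolynomial in
/-- Every real polynomial `f` of degree at most `N ≥ 2` with `f(0) = f(1) = 0` admits a
random outcome voting model representation: there exist `β > 0` and voting probabilities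
`α_0 = 0 ≤ α_k ≤ 1 = α_N` such that
`f(u) = β ( ∑_{k=0}^{N} C(N,k) α_k u^k (1−u)^{N−k} − u )` for all real `u`. -/
theorem random_outcome_voting_representation (N : ℕ) (hN : 2 ≤ N)
    (f : Polynomial ℝ) (hf : f.natDegree ≤ N)
    (hf0 : f.eval 0 = 0) (hf1 : f.eval 1 = 0) :
    ∃ β : ℝ, 0 < β ∧ ∃ α : ℕ → ℝ,
      α 0 = 0 ∧ α N = 1 ∧ (∀ k ≤ N, 0 ≤ α k ∧ α k ≤ 1) ∧
      ∀ u : ℝ, f.eval u =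
        β * ((∑ k ∈ Finset.range (N + 1),
          (N.choose k : ℝ) * α k * u ^ k * (1 - u) ^ (N - k)) - u) := by
  have hN0 : N ≠ 0 := by omega
  obtain ⟨c, hfc⟩ := exists_eq_sum_smul hf
  have hc0 : c 0 = 0 := by rw [← hf0, hfc, eval_zero_sum_smul]
  have hcN : c N = 0 := by rw [← hf1, hfc, eval_one_sum_smul]
  set β : ℝ := N * ∑ k ∈ range (N + 1), |c k| + 1
  have hβ : 0 < β := by positivity
  have hcβ : ∀ k ≤ N, N * |c k| ≤ β := fun k hk =>
    le_add_of_le_of_nonneg (mul_le_mul_of_nonneg_left (single_le_sum (fun j _ => abs_nonneg (c j))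
      (mem_range.2 (Nat.lt_succ_of_le hk))) N.cast_nonneg) zero_le_one
  set α : ℕ → ℝ := fun k => c k / β + k / N
  have hfα : f = C β * (∑ k ∈ range (N + 1), α k • bernsteinPolynomial ℝ N k - X) := by
    simp_rw [α, add_smul, sum_add_distrib, div_eq_inv_mul (c _), mul_smul, ← smul_sum, ← hfc,
      sum_div_smul_eq_X hN0, add_sub_cancel_right, smul_eq_C_mul, ← mul_assoc,
      ← C_mul, mul_inv_cancel₀ hβ.ne', C_1, one_mul]
  refine ⟨β, hβ, α, by simp [α, hc0], by simp [α, hcN, hN0], fun k hk =>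
    div_add_div_mem_Icc hk hβ (hcβ k hk) (fun h => h ▸ hc0) (fun h => h ▸ hcN), fun u => ?_⟩
  rw [hfα]
  simp only [eval_mul, eval_C, eval_sub, eval_X, eval_finsetSum, eval_smul, smul_eq_mul, eval_eq]
  congr 2
  exact sum_congr rfl fun k _ => by ring
end

section
/- Let N ≥ 2 be an integer, let f be a real polynomial of degree at most N with f(0) = f(1) = 0, and let b_0, …, b_N be its coefficients in the Bernstein basis, i.e. f(u) = ∑_{k=0}^{N} b_k C(N,k) u^k (1−u)^{N−k}. Then b_0 = b_N = 0, and for every real β > 0 with β ≥ N · max_{0 ≤ k ≤ N} |b_k|, the numbers α_k := k/N + b_k/β satisfy α_0 = 0, α_N = 1, 0 ≤ α_k ≤ 1 for all k, and f(u) = β ( ∑_{k=0}^{N} C(N,k) α_k u^k (1−u)^{N−k} − u ) for all real u. -/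
/-!
The endpoint values of a Bernstein expansion are its first and last coefficients, which gives
`b₀ = f(0) = 0` and `b_N = f(1) = 0`. The Bernstein basis reproduces the identity,
`∑ (k/N) C(N,k) u^k (1-u)^(N-k) = u`, so the coefficients `α_k = k/N + b_k/β` expand `u + f(u)/β`.
For `0 < k < N` the bound `|b_k|/β ≤ 1/N` keeps `α_k` within `[1/N - 1/N, (N-1)/N + 1/N] = [0, 1]`.
-/

open Finset

lemma bernstein_sum_eval_zero (N : ℕ) (c : ℕ → ℝ) :
    ∑ k ∈ range (N + 1), c k * (N.choose k : ℝ) * (0 : ℝ) ^ k * (1 - 0) ^ (N - k) = c 0 := by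
  rw [sum_eq_single_of_mem 0 (mem_range.2 N.succ_pos)]
  · simp
  · intro k _ hk
    simp [zero_pow hk]

lemma bernstein_sum_eval_one (N : ℕ) (c : ℕ → ℝ) :
    ∑ k ∈ range (N + 1), c k * (N.choose k : ℝ) * (1 : ℝ) ^ k * (1 - 1) ^ (N - k) = c N := by
  rw [sum_eq_single_of_mem N (self_mem_range_succ N)]
  · simp
  · intro k hk hkN
    have hlt : k < N := lt_of_le_of_ne (Nat.lt_succ_iff.1 (mem_range.1 hk)) hkN
    simp [zero_pow (Nat.sub_ne_zero_of_lt hlt)]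

lemma sum_choose_mul_div_mul_pow_mul_pow {N : ℕ} (hN : N ≠ 0) (u : ℝ) :
    ∑ k ∈ range (N + 1), (N.choose k : ℝ) * ((k : ℝ) / N) * u ^ k * (1 - u) ^ (N - k) = u := by
  have h := congrArg (Polynomial.eval u) (bernsteinPolynomial.sum_smul ℝ N)
  simp only [Polynomial.eval_finsetSum, bernsteinPolynomial,
    Polynomial.eval_mul, Polynomial.eval_pow, Polynomial.eval_sub, Polynomial.eval_one,
    Polynomial.eval_X, nsmul_eq_mul, Polynomial.eval_natCast] at h
  have hN' : (N : ℝ) ≠ 0 := Nat.cast_ne_zero.2 hN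
  calc _ = (∑ k ∈ range (N + 1),
          (k : ℝ) * ((N.choose k : ℝ) * u ^ k * (1 - u) ^ (N - k))) / N := by
        rw [sum_div]
        exact sum_congr rfl fun k _ => by ring
    _ = u := by rw [h]; field_simp

lemma div_add_mem_Icc_of_abs_mul_le {k N x : ℝ} (hk : 1 ≤ k) (hkN : k + 1 ≤ N)
    (hx : |x| * N ≤ 1) : k / N + x ∈ Set.Icc 0 1 := by
  have hN : 0 < N := by linarith
  have hxN : |x| ≤ 1 / N := by rwa [le_div_iff₀ hN]
  obtain ⟨hx₁, hx₂⟩ := abs_le.1 hxN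
  have hk₁ : 1 / N ≤ k / N := by gcongr
  have hk₂ : k / N ≤ 1 - 1 / N := by
    rw [div_le_iff₀ hN, sub_mul, one_div_mul_cancel hN.ne']
    linarith
  constructor <;> linarith

theorem voting_probabilities_construction_general (N : ℕ) (hN : 2 ≤ N)
    (f : Polynomial ℝ)
    (hf0 : f.eval 0 = 0) (hf1 : f.eval 1 = 0) (b : ℕ → ℝ)
    (hb : ∀ u : ℝ, f.eval u =
      ∑ k ∈ Finset.range (N + 1),
        b k * (N.choose k : ℝ) * u ^ k * (1 - u) ^ (N - k)) :
    b 0 = 0 ∧ b N = 0 ∧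
    ∀ β : ℝ, 0 < β →
      (N : ℝ) * ((Finset.range (N + 1)).sup' Finset.nonempty_range_add_one
          fun k => |b k|) ≤ β →
      ∀ α : ℕ → ℝ, (∀ k, α k = (k : ℝ) / (N : ℝ) + b k / β) →
        α 0 = 0 ∧ α N = 1 ∧ (∀ k ≤ N, 0 ≤ α k ∧ α k ≤ 1) ∧
        ∀ u : ℝ, f.eval u =
          β * ((∑ k ∈ Finset.range (N + 1),
            (N.choose k : ℝ) * α k * u ^ k * (1 - u) ^ (N - k)) - u) := by
  have hN0 : N ≠ 0 := by omega
  have hb0 : b 0 = 0 := by rw [← hf0, hb 0, bernstein_sum_eval_zero]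
  have hbN : b N = 0 := by rw [← hf1, hb 1, bernstein_sum_eval_one]
  refine ⟨hb0, hbN, fun β hβ hβb α hα => ?_⟩
  have hα0 : α 0 = 0 := by simp [hα 0, hb0]
  have hαN : α N = 1 := by simp [hα N, hbN, hN0]
  refine ⟨hα0, hαN, fun k hk => ?_, fun u => ?_⟩
  · rcases Nat.eq_zero_or_pos k with rfl | hk0
    · simp [hα0]
    rcases hk.eq_or_lt with rfl | hkN
    · simp [hαN]
    have hbk : |b k| * N ≤ β := by
      have := le_sup' (fun k => |b k|) (mem_range.2 (Nat.lt_succ_of_le hk))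
      nlinarith
    rw [hα k]
    refine div_add_mem_Icc_of_abs_mul_le (by exact_mod_cast hk0) (by exact_mod_cast hkN) ?_
    rwa [abs_div, abs_of_pos hβ, div_mul_eq_mul_div, div_le_one hβ]
  · have hsplit : ∑ k ∈ range (N + 1), (N.choose k : ℝ) * α k * u ^ k * (1 - u) ^ (N - k) =
        ∑ k ∈ range (N + 1), (N.choose k : ℝ) * ((k : ℝ) / N) * u ^ k * (1 - u) ^ (N - k) +
          (∑ k ∈ range (N + 1), b k * (N.choose k : ℝ) * u ^ k * (1 - u) ^ (N - k)) / β := by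
      rw [sum_div, ← sum_add_distrib]
      exact sum_congr rfl fun k _ => by rw [hα k]; ring
    rw [hsplit, sum_choose_mul_div_mul_pow_mul_pow hN0, ← hb u]
    field_simp
    ring

/-- Quantitative construction of the voting probabilities: if `f` is a real polynomial of
degree at most `N ≥ 2` with `f(0) = f(1) = 0` and Bernstein coefficients `b_0, …, b_N`,
then `b_0 = b_N = 0`, and for every `β > 0` with `β ≥ N · max_k |b_k|` the numbers
`α_k = k/N + b_k/β` satisfy `α_0 = 0`, `α_N = 1`, `0 ≤ α_k ≤ 1`, and
`f(u) = β ( ∑_{k=0}^{N} C(N,k) α_k u^k (1−u)^{N−k} − u )` for all real `u`. -/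
theorem voting_probabilities_construction (N : ℕ) (hN : 2 ≤ N)
    (f : Polynomial ℝ) (hf : f.natDegree ≤ N)
    (hf0 : f.eval 0 = 0) (hf1 : f.eval 1 = 0) (b : ℕ → ℝ)
    (hb : ∀ u : ℝ, f.eval u =
      ∑ k ∈ Finset.range (N + 1),
        b k * (N.choose k : ℝ) * u ^ k * (1 - u) ^ (N - k)) :
    b 0 = 0 ∧ b N = 0 ∧
    ∀ β : ℝ, 0 < β →
      (N : ℝ) * ((Finset.range (N + 1)).sup' Finset.nonempty_range_add_one
          fun k => |b k|) ≤ β →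
      ∀ α : ℕ → ℝ, (∀ k, α k = (k : ℝ) / (N : ℝ) + b k / β) →
        α 0 = 0 ∧ α N = 1 ∧ (∀ k ≤ N, 0 ≤ α k ∧ α k ≤ 1) ∧
        ∀ u : ℝ, f.eval u =
          β * ((∑ k ∈ Finset.range (N + 1),
            (N.choose k : ℝ) * α k * u ^ k * (1 - u) ^ (N - k)) - u) :=
  voting_probabilities_construction_general N hN f hf0 hf1 b hb
end

section
/- Let N ≥ 2 be an integer and let f be a real polynomial of degree at most N with f(0) = f(1) = 0. Then there exist a real number β > 0 and nonnegative real numbers ζ_1, …, ζ_N with ∑_{j=1}^{N} ζ_j = 1 such that f(u) = β ( ∑_{j=1}^{N} ζ_j ∑_{k=j}^{N} C(N,k) u^k (1−u)^{N−k} − u ) for all real u. -/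
/-!
Write `b_k = C(N,k) u^k (1-u)^(N-k)` for the Bernstein basis and `T_j = ∑_{k ≥ j} b_k` for its
tail sums, the probability that at least `j` of `N` children vote 1. Every polynomial of degree
at most `N` is `∑ a_k b_k`, and since `b_k(0) = [k = 0]` and `b_k(1) = [k = N]`, the conditions
`f(0) = f(1) = 0` say `a_0 = a_N = 0`. Summation by parts gives `f = ∑_{j=1}^N c_j T_j` with
`c_j = a_j - a_{j-1}`, so `∑ c_j = 0`; moreover `∑_{j=1}^N T_j = ∑ k b_k = N u`. Hence for every
`β > 0`, `f = β (∑ ζ_j T_j - u)` with `ζ_j = 1/N + c_j/β`, and these weights sum to one and are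
nonnegative as soon as `β` is large.
-/

open Finset Polynomial

theorem Finset.sum_Icc_one_sub_pred {G : Type*} [AddCommGroup G] (a : ℕ → G) (n : ℕ) :
    ∑ j ∈ Icc 1 n, (a j - a (j - 1)) = a n - a 0 := by
  induction n with
  | zero => simp
  | succ n ih => rw [sum_Icc_succ_top (by omega), ih, Nat.add_sub_cancel]; abel

theorem Finset.sum_range_by_parts_tail {R M : Type*} [Ring R] [AddCommGroup M] [Module R M]
    (a : ℕ → R) (v : ℕ → M) (n : ℕ) :
    ∑ k ∈ range (n + 1), a k • v k =
      a 0 • ∑ k ∈ range (n + 1), v k + ∑ j ∈ Icc 1 n, (a j - a (j - 1)) • ∑ k ∈ Icc j n, v k := by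
  have hswap : ∑ j ∈ Icc 1 n, (a j - a (j - 1)) • ∑ k ∈ Icc j n, v k =
      ∑ k ∈ Icc 1 n, (a k - a 0) • v k := by
    simp_rw [smul_sum, ← sum_Icc_one_sub_pred a, sum_smul]
    exact sum_comm' fun j k => by simp only [mem_Icc]; omega
  rw [hswap, range_eq_Ico, sum_eq_sum_Ico_succ_bot (by omega : 0 < n + 1),
    sum_eq_sum_Ico_succ_bot (by omega : 0 < n + 1), zero_add, Ico_add_one_right_eq_Icc, smul_add,
    smul_sum]
  simp only [sub_smul, sum_sub_distrib]
  abel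

theorem Finset.exists_pos_mul_sub_inv_card_of_sum_eq_zero {ι : Type*} {s : Finset ι}
    (hs : s.Nonempty) {c : ι → ℝ} (hc : ∑ j ∈ s, c j = 0) :
    ∃ β : ℝ, 0 < β ∧ ∃ ζ : ι → ℝ, (∀ j ∈ s, 0 ≤ ζ j) ∧ ∑ j ∈ s, ζ j = 1 ∧
      ∀ j, c j = β * (ζ j - (#s : ℝ)⁻¹) := by
  set S := ∑ j ∈ s, |c j|
  have hcard : (0 : ℝ) < #s := by exact_mod_cast hs.card_pos
  have hS : 0 ≤ S := sum_nonneg fun j _ => abs_nonneg _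
  have hβ : 0 < 1 + #s * S := by positivity
  refine ⟨1 + #s * S, hβ, fun j => (#s : ℝ)⁻¹ + c j / (1 + #s * S), fun j hj => ?_, ?_, fun j => ?_⟩
  · have : -c j ≤ S := (neg_le_abs _).trans (single_le_sum (fun i _ => abs_nonneg (c i)) hj)
    dsimp only
    rw [inv_eq_one_div, div_add_div _ _ hcard.ne' hβ.ne']
    exact div_nonneg (by nlinarith) (by positivity)
  · rw [sum_add_distrib, ← sum_div, hc, sum_const, nsmul_eq_mul, mul_inv_cancel₀ hcard.ne']
    simp
  · field_simp
    ring

namespace bernsteinPolynomial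

section CommRing

variable (R : Type*) [CommRing R]

theorem choose_smul_add (n i m : ℕ) :
    (i + m).choose i • bernsteinPolynomial R n (i + m) =
      n.choose i • (X ^ i * bernsteinPolynomial R (n - i) m) := by
  have hchoose : (n.choose (i + m) * (i + m).choose i : R[X]) = n.choose i * (n - i).choose m := by
    have := Nat.choose_mul (n := n) (Nat.le_add_right i m)
    rw [Nat.add_sub_cancel_left] at this
    exact_mod_cast congrArg (Nat.cast : ℕ → R[X]) this
  simp only [bernsteinPolynomial, nsmul_eq_mul, show n - (i + m) = n - i - m by omega, pow_add]
  linear_combination (X ^ i * X ^ m * (1 - X) ^ (n - i - m) : R[X]) * hchoose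

theorem sum_Icc_choose_smul (n i : ℕ) (h : i ≤ n) :
    ∑ k ∈ Icc i n, k.choose i • bernsteinPolynomial R n k = n.choose i • X ^ i := by
  rw [← Ico_add_one_right_eq_Icc, sum_Ico_eq_sum_range, show n + 1 - i = n - i + 1 by omega,
    sum_congr rfl fun m _ => choose_smul_add R n i m, ← smul_sum, ← mul_sum,
    bernsteinPolynomial.sum, mul_one]

noncomputable def tail (n j : ℕ) : R[X] :=
  ∑ k ∈ Icc j n, bernsteinPolynomial R n k

theorem eval_tail (n j : ℕ) (u : R) :
    (tail R n j).eval u = ∑ k ∈ Icc j n, (n.choose k : R) * u ^ k * (1 - u) ^ (n - k) := by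
  simp [tail, eval_finsetSum, bernsteinPolynomial]

theorem sum_tail (n : ℕ) : ∑ j ∈ Icc 1 n, tail R n j = n • X := by
  have h := sum_range_by_parts_tail (fun k : ℕ => (k : ℤ)) (bernsteinPolynomial R n) n
  have hstep : ∀ j ∈ Icc 1 n, ((j : ℤ) - ((j - 1 : ℕ) : ℤ)) • tail R n j = tail R n j := by
    intro j hj
    rw [Nat.cast_sub (mem_Icc.1 hj).1]
    simp
  simp only [natCast_zsmul, Nat.cast_zero, zero_smul, zero_add] at h
  rw [← bernsteinPolynomial.sum_smul, h, ← sum_congr rfl hstep]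
  rfl

end CommRing

section Field

variable {K : Type*} [Field K] [CharZero K]

theorem mem_span_of_natDegree_le {n : ℕ} {f : K[X]} (hf : f.natDegree ≤ n) :
    f ∈ Submodule.span K (bernsteinPolynomial K n '' range (n + 1)) := by
  classical
  have hdeg : f ∈ degreeLT K (n + 1) :=
    mem_degreeLT.2 (degree_le_natDegree.trans_lt (by exact_mod_cast Nat.lt_succ_of_le hf))
  rw [degreeLT_eq_span_X_pow] at hdeg
  refine Submodule.span_le.2 ?_ hdeg
  simp only [coe_image, Set.image_subset_iff, coe_range]
  intro i hi
  have hin : i ≤ n := Nat.lt_succ_iff.1 hi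
  have hchoose : (n.choose i : K) ≠ 0 := Nat.cast_ne_zero.2 (Nat.choose_pos hin).ne'
  rw [Set.mem_preimage, SetLike.mem_coe, ← inv_smul_smul₀ hchoose (X ^ i), Nat.cast_smul_eq_nsmul,
    ← sum_Icc_choose_smul K n i hin]
  refine Submodule.smul_mem _ _ (Submodule.sum_mem _ fun k hk => Submodule.smul_of_tower_mem _ _
    (Submodule.subset_span ⟨k, by simp at hk ⊢; omega, rfl⟩))

theorem exists_eq_sum_smul_tail {n : ℕ} {f : K[X]} (hf : f.natDegree ≤ n) (h0 : f.eval 0 = 0)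
    (h1 : f.eval 1 = 0) :
    ∃ c : ℕ → K, ∑ j ∈ Icc 1 n, c j = 0 ∧ f = ∑ j ∈ Icc 1 n, c j • tail K n j := by
  obtain ⟨a, rfl⟩ :=
    (Submodule.mem_span_image_finset_iff_exists_fun' K).1 (mem_span_of_natDegree_le hf)
  have ha0 : a 0 = 0 := by simpa [eval_finsetSum, eval_at_0] using h0
  have han : a n = 0 := by simpa [eval_finsetSum, eval_at_1] using h1
  refine ⟨fun j => a j - a (j - 1), by rw [sum_Icc_one_sub_pred, ha0, han, sub_zero], ?_⟩
  rw [sum_range_by_parts_tail, ha0, zero_smul, zero_add]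
  rfl

end Field

end bernsteinPolynomial

open bernsteinPolynomial in
/-- Every real polynomial `f` of degree at most `N ≥ 2` with `f(0) = f(1) = 0` admits a
random threshold voting model representation: there exist `β > 0` and threshold
probabilities `ζ_1, …, ζ_N ≥ 0` summing to one such that
`f(u) = β ( ∑_{j=1}^{N} ζ_j ∑_{k=j}^{N} C(N,k) u^k (1−u)^{N−k} − u )` for all real `u`. -/
theorem random_threshold_voting_representation (N : ℕ) (hN : 2 ≤ N)
    (f : Polynomial ℝ) (hf : f.natDegree ≤ N)
    (hf0 : f.eval 0 = 0) (hf1 : f.eval 1 = 0) :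
    ∃ β : ℝ, 0 < β ∧ ∃ ζ : ℕ → ℝ,
      (∀ j ∈ Finset.Icc 1 N, 0 ≤ ζ j) ∧ (∑ j ∈ Finset.Icc 1 N, ζ j = 1) ∧
      ∀ u : ℝ, f.eval u =
        β * ((∑ j ∈ Finset.Icc 1 N, ζ j *
          ∑ k ∈ Finset.Icc j N, (N.choose k : ℝ) * u ^ k * (1 - u) ^ (N - k)) - u) := by
  obtain ⟨c, hc, hf_eq⟩ := exists_eq_sum_smul_tail hf hf0 hf1
  obtain ⟨β, hβ, ζ, hζ, hζ_sum, hcζ⟩ :=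
    exists_pos_mul_sub_inv_card_of_sum_eq_zero (nonempty_Icc.2 (by omega : 1 ≤ N)) hc
  refine ⟨β, hβ, ζ, hζ, hζ_sum, fun u => ?_⟩
  have htail : ∑ j ∈ Icc 1 N, (tail ℝ N j).eval u = N * u := by
    simpa [eval_finsetSum] using congr_arg (eval u) (sum_tail ℝ N)
  rw [hf_eq]
  simp only [eval_finsetSum, eval_smul, smul_eq_mul, hcζ, ← eval_tail, Nat.card_Icc,
    Nat.add_sub_cancel]
  calc ∑ j ∈ Icc 1 N, β * (ζ j - (N : ℝ)⁻¹) * (tail ℝ N j).eval u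
      = β * (∑ j ∈ Icc 1 N, ζ j * (tail ℝ N j).eval u -
          (N : ℝ)⁻¹ * ∑ j ∈ Icc 1 N, (tail ℝ N j).eval u) := by
        rw [mul_sum, ← sum_sub_distrib, mul_sum]
        exact sum_congr rfl fun j _ => by ring
    _ = _ := by rw [htail, inv_mul_cancel_left₀ (by positivity)]
end
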